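/- arXiv:2307.03034 — 2 statements merged into one kernel-verified Lean document; each statement's English description precedes it below -/
import Mathlib

section
/- Let C = {Ω_ω}_{ω∈S} be a full subset chain: each ω ∈ Ω_ω; for distinct ω_i, ω_j either Ω_{ω_i} ⊊ Ω_{ω_j} or Ω_{ω_j} ⊊ Ω_{ω_i}; and Ω_{ω_i} ⊊ Ω_{ω_j} implies ω_j ∉ Ω_{ω_i}. Suppose an index function λ : S → ℝ satisfies: Ω_{ω_i} ⊊ Ω_{ω_j} implies λ(ω_i) < λ(ω_j). Then Ω_{ω} = {ω' ∈ S : λ(ω') ≤ λ(ω)} for every ω ∈ S. -/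
/-- Lemma 3.3, index characterization of a full subset chain:
if `{Ω_ω}` is a full subset chain on a countable state set `S` and the index
`λ` is strictly compatible with the chain order, then each chain set is the
lower level set of `λ`. -/
theorem stmt12 {S : Type*} [Countable S] (Om : S → Set S) (lam : S → ℝ)
    (hmem : ∀ ω, ω ∈ Om ω)
    (htot : ∀ ωi ωj : S, ωi ≠ ωj → Om ωi ⊂ Om ωj ∨ Om ωj ⊂ Om ωi)
    (hnotin : ∀ ωi ωj : S, Om ωi ⊂ Om ωj → ωj ∉ Om ωi)
    (hlam : ∀ ωi ωj : S, Om ωi ⊂ Om ωj → lam ωi < lam ωj) :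
    ∀ ω : S, Om ω = {ω' : S | lam ω' ≤ lam ω} := by
  intro ω
  ext ω'
  simp only [Set.mem_setOf_eq]
  constructor
  · intro h
    by_cases he : ω' = ω
    · subst he; exact le_refl _
    · rcases htot ω' ω he with hsub | hsub
      · exact (hlam _ _ hsub).le
      · exact absurd h (hnotin ω ω' hsub)
  · intro h
    by_cases he : ω' = ω
    · subst he; exact hmem _
    · rcases htot ω' ω he with hsub | hsub
      · exact hsub.subset (hmem ω')
      · exact absurd h (not_le.mpr (hlam ω ω' hsub))
end

section
/- Decomposition Law: assume bounded rewards |R_i| ≤ C on the countable belief state space Ω(ω₀), flow-balance constraints on the occupation measures x_i^a(π, ω_j), and define A_i^Ω = 1 + β∑_k (p_{ik}^1 − p_{ik}^0) T_k^{Ω^c} and W_i^Ω = R_i + β∑_k (p_{ik}^1 − p_{ik}^0) R_k^{Ω^c}. Then for any policy π, initial state ω_j, and subset Ω: T_j^π + ∑_{i∈Ω^c} A_i^Ω x_i^0(π, ω_j) = T_j^{Ω^c} + ∑_{i∈Ω} A_i^Ω x_i^1(π, ω_j). -/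
/-!
Multiplying the flow-balance equations by `T = T^{Ωᶜ}` and summing over all states gives
`∑ᵢ Tᵢ (x¹ᵢ + x⁰ᵢ) = T_{j₀} + β ∑ᵢ x¹ᵢ (p¹T)ᵢ + β ∑ᵢ x⁰ᵢ (p⁰T)ᵢ`; the order of summation
may be exchanged because `T` is bounded and the occupation measures are summable. The
priority equations, `Tᵢ = 1 + β (p¹T)ᵢ` on `Ωᶜ` and `Tᵢ = β (p⁰T)ᵢ` on `Ω`, then identify
`Tᵢ (x¹ᵢ + x⁰ᵢ) - β x¹ᵢ (p¹T)ᵢ - β x⁰ᵢ (p⁰T)ᵢ` with `x¹ᵢ + 1_{Ωᶜ}(i) Aᵢ x⁰ᵢ - 1_Ω(i) Aᵢ x¹ᵢ`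
for every state `i`.
-/

def IsRowStochastic {S : Type*} (p : S → S → ℝ) : Prop :=
  (∀ i j, 0 ≤ p i j) ∧ ∀ i, HasSum (p i) 1

section StochasticKernel

variable {S : Type*} {p p1 p0 : S → S → ℝ} {T x : S → ℝ} {M β : ℝ}

theorem summable_mul_of_abs_le {f g : S → ℝ} (hf : Summable f) (hg : ∀ i, |g i| ≤ M) :
    Summable fun i => f i * g i :=
  (hf.abs.mul_right M).of_norm_bounded fun i => by
    rw [Real.norm_eq_abs, abs_mul]
    exact mul_le_mul_of_nonneg_left (hg i) (abs_nonneg _)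

theorem IsRowStochastic.abs_tsum_mul_le (hp : IsRowStochastic p) (hT : ∀ k, |T k| ≤ M) (i : S) :
    |∑' k, p i k * T k| ≤ M := by
  have hpT : Summable fun k => p i k * T k := summable_mul_of_abs_le (hp.2 i).summable hT
  calc |∑' k, p i k * T k| ≤ ∑' k, |p i k * T k| := by
        simpa only [Real.norm_eq_abs] using norm_tsum_le_tsum_norm hpT.norm
    _ ≤ ∑' k, p i k * M := by
        refine hpT.abs.tsum_le_tsum (fun k => ?_) ((hp.2 i).summable.mul_right M)
        rw [abs_mul, abs_of_nonneg (hp.1 i k)]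
        exact mul_le_mul_of_nonneg_left (hT k) (hp.1 i k)
    _ = M := by rw [tsum_mul_right, (hp.2 i).tsum_eq, one_mul]

theorem IsRowStochastic.hasSum_mul_tsum_comm (hp : IsRowStochastic p) (hT : ∀ k, |T k| ≤ M)
    (hx : Summable x) :
    HasSum (fun i => T i * ∑' j, p j i * x j) (∑' j, x j * ∑' i, p j i * T i) := by
  have hbound : Summable fun ji : S × S => |x ji.1| * p ji.1 ji.2 * M := by
    have hnonneg : (0 : S × S → ℝ) ≤ fun ji => |x ji.1| * p ji.1 ji.2 := by
      intro ji
      exact mul_nonneg (abs_nonneg _) (hp.1 _ _)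
    refine Summable.mul_right M ((summable_prod_of_nonneg hnonneg).2
      ⟨fun j => (hp.2 j).summable.mul_left |x j|, ?_⟩)
    simpa only [tsum_mul_left, (hp.2 _).tsum_eq, mul_one] using hx.abs
  have hf : Summable (Function.uncurry fun j i => x j * (p j i * T i)) :=
    hbound.of_norm_bounded fun ⟨j, i⟩ => by
      rw [Function.uncurry_apply_pair, Real.norm_eq_abs, abs_mul, abs_mul,
        abs_of_nonneg (hp.1 j i), ← mul_assoc]
      exact mul_le_mul_of_nonneg_left (hT i) (mul_nonneg (abs_nonneg _) (hp.1 j i))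
  have hcols : Summable fun i => ∑' j, x j * (p j i * T i) := hf.prod_symm.prod
  convert hcols.hasSum using 1
  · exact funext fun i => by rw [← tsum_mul_left]; exact tsum_congr fun j => by ring
  · rw [hf.tsum_comm]
    exact tsum_congr fun j => tsum_mul_left.symm

theorem tsum_sub_mul_eq_of_summable (hp1 : ∀ i, Summable (p1 i)) (hp0 : ∀ i, Summable (p0 i))
    (hT : ∀ k, |T k| ≤ M) (i : S) :
    ∑' k, (p1 i k - p0 i k) * T k = ∑' k, p1 i k * T k - ∑' k, p0 i k * T k := by
  simp_rw [sub_mul]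
  exact (summable_mul_of_abs_le (hp1 i) hT).tsum_sub (summable_mul_of_abs_le (hp0 i) hT)

theorem summable_marginal_mul {A : S → ℝ} (hp1 : IsRowStochastic p1) (hp0 : IsRowStochastic p0)
    (hT : ∀ k, |T k| ≤ M) (hA : ∀ i, A i = 1 + β * ∑' k, (p1 i k - p0 i k) * T k)
    (hx : Summable x) : Summable fun i => A i * x i := by
  have hA_le : ∀ i, |A i| ≤ 1 + |β| * (M + M) := fun i => by
    rw [hA, tsum_sub_mul_eq_of_summable (fun i => (hp1.2 i).summable)
      (fun i => (hp0.2 i).summable) hT]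
    calc _ ≤ |1| + |β| * |∑' k, p1 i k * T k - ∑' k, p0 i k * T k| := by
          rw [← abs_mul]; exact abs_add_le _ _
      _ ≤ 1 + |β| * (M + M) := by
          rw [abs_one]
          gcongr
          exact (abs_sub _ _).trans (add_le_add (hp1.abs_tsum_mul_le hT i)
            (hp0.abs_tsum_mul_le hT i))
  simpa only [mul_comm] using summable_mul_of_abs_le hx hA_le

theorem hasSum_mul_occupation_of_balance [DecidableEq S] {x1 x0 : S → ℝ} {j0 : S}
    (hp1 : IsRowStochastic p1) (hp0 : IsRowStochastic p0) (hT : ∀ k, |T k| ≤ M)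
    (hx1 : Summable x1) (hx0 : Summable x0)
    (hbal : ∀ i, x1 i + x0 i = (if i = j0 then (1 : ℝ) else 0)
      + β * ∑' j, p1 j i * x1 j + β * ∑' j, p0 j i * x0 j) :
    HasSum (fun i => T i * (x1 i + x0 i)) (T j0 + β * ∑' j, x1 j * ∑' k, p1 j k * T k
      + β * ∑' j, x0 j * ∑' k, p0 j k * T k) := by
  convert ((hasSum_ite_eq j0 (T j0)).add ((hp1.hasSum_mul_tsum_comm hT hx1).mul_left β)).add
    ((hp0.hasSum_mul_tsum_comm hT hx0).mul_left β) using 1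
  funext i
  rw [hbal i]
  split_ifs with hi
  · subst hi; ring
  · ring

theorem hasSum_decomposition [DecidableEq S] (Ω : Set S) {x1 x0 A : S → ℝ} {j0 : S}
    (hp1 : IsRowStochastic p1) (hp0 : IsRowStochastic p0) (hT : ∀ k, |T k| ≤ M)
    (hx1 : Summable x1) (hx0 : Summable x0)
    (hbal : ∀ i, x1 i + x0 i = (if i = j0 then (1 : ℝ) else 0)
      + β * ∑' j, p1 j i * x1 j + β * ∑' j, p0 j i * x0 j)
    (hT1 : ∀ i ∈ Ωᶜ, T i = 1 + β * ∑' j, p1 i j * T j)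
    (hT0 : ∀ i ∈ Ω, T i = β * ∑' j, p0 i j * T j)
    (hA : ∀ i, A i = 1 + β * ∑' k, (p1 i k - p0 i k) * T k) :
    HasSum (fun i => x1 i + Ωᶜ.indicator (fun i => A i * x0 i) i
      - Ω.indicator (fun i => A i * x1 i) i) (T j0) := by
  have hactive := (summable_mul_of_abs_le hx1 (hp1.abs_tsum_mul_le hT)).hasSum.mul_left β
  have hpassive := (summable_mul_of_abs_le hx0 (hp0.abs_tsum_mul_le hT)).hasSum.mul_left β
  have h := (hasSum_mul_occupation_of_balance hp1 hp0 hT hx1 hx0 hbal).sub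
    (hactive.add hpassive)
  rw [add_assoc, add_sub_cancel_right] at h
  refine h.congr_fun fun i => ?_
  have hA' : A i = 1 + β * (∑' k, p1 i k * T k - ∑' k, p0 i k * T k) := by
    rw [hA, tsum_sub_mul_eq_of_summable (fun i => (hp1.2 i).summable)
      (fun i => (hp0.2 i).summable) hT]
  by_cases hi : i ∈ Ω
  · rw [Set.indicator_of_notMem (Set.notMem_compl_iff.2 hi), Set.indicator_of_mem hi, hA',
      hT0 i hi]
    ring
  · rw [Set.indicator_of_mem (Set.mem_compl hi), Set.indicator_of_notMem hi, hA', hT1 i hi]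
    ring

end StochasticKernel

theorem stmt18_general {S : Type*} [DecidableEq S]
    (β : ℝ)
    (p1 p0 : S → S → ℝ)
    (hp1nn : ∀ i j, 0 ≤ p1 i j) (hp0nn : ∀ i j, 0 ≤ p0 i j)
    (hp1 : ∀ i, HasSum (p1 i) 1) (hp0 : ∀ i, HasSum (p0 i) 1)
    (Ω : Set S) (j0 : S)
    -- occupation measures of the policy π started at j0
    (x1 x0 : S → ℝ)
    (hx1nn : ∀ i, 0 ≤ x1 i) (hx0nn : ∀ i, 0 ≤ x0 i)
    (hbal : ∀ i, x1 i + x0 i = (if i = j0 then (1 : ℝ) else 0)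
      + β * ∑' j, p1 j i * x1 j + β * ∑' j, p0 j i * x0 j)
    (hxsum : HasSum (fun i => x1 i + x0 i) (1 / (1 - β)))
    -- expected discounted active time of the Ω^c-priority policy
    (TOc : S → ℝ)
    (hTdp1 : ∀ i ∈ Ωᶜ, TOc i = 1 + β * ∑' j, p1 i j * TOc j)
    (hTdp0 : ∀ i ∈ Ω, TOc i = β * ∑' j, p0 i j * TOc j)
    (hTbd : ∀ i, |TOc i| ≤ 1 / (1 - β))
    -- marginal active-time coefficients A_i^Ω
    (A : S → ℝ)
    (hA : ∀ i, A i = 1 + β * ∑' k, (p1 i k - p0 i k) * TOc k) :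
    (∑' i, x1 i) + (∑' i : ↥Ωᶜ, A i * x0 i) =
      TOc j0 + (∑' i : ↥Ω, A i * x1 i) := by
  have hx1 : Summable x1 := Summable.of_nonneg_of_le hx1nn
    (fun i => le_add_of_nonneg_right (hx0nn i)) hxsum.summable
  have hx0 : Summable x0 := Summable.of_nonneg_of_le hx0nn
    (fun i => le_add_of_nonneg_left (hx1nn i)) hxsum.summable
  have hp1' : IsRowStochastic p1 := ⟨hp1nn, hp1⟩
  have hp0' : IsRowStochastic p0 := ⟨hp0nn, hp0⟩
  have hdecomp := hasSum_decomposition Ω hp1' hp0' hTbd hx1 hx0 hbal hTdp1 hTdp0 hA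
  have hsplit := (hx1.hasSum.add
    ((summable_marginal_mul hp1' hp0' hTbd hA hx0).indicator Ωᶜ).hasSum).sub
    ((summable_marginal_mul hp1' hp0' hTbd hA hx1).indicator Ω).hasSum
  rw [tsum_subtype Ωᶜ fun i => A i * x0 i, tsum_subtype Ω fun i => A i * x1 i]
  linarith [hsplit.unique hdecomp]

/-- Decomposition Law, Theorem 3.1, time part: on the countable
belief state space with bounded rewards `|R_i| ≤ C`, probability kernels
`p¹, p⁰`, occupation measures `x¹, x⁰` of a policy π started at `ω_j`
satisfying the flow-balance constraints, the Ω^c-priority discounted active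
times `T^{Ω^c}`, and
`A_i^Ω = 1 + β ∑_k (p¹_{ik} - p⁰_{ik}) T_k^{Ω^c}`, we have
`T_j^π + ∑_{i ∈ Ω^c} A_i^Ω x_i^0 = T_j^{Ω^c} + ∑_{i ∈ Ω} A_i^Ω x_i^1`,
where `T_j^π = ∑_i x_i^1`. -/
theorem stmt18 {S : Type*} [Countable S] [DecidableEq S]
    (β C : ℝ) (hβ0 : 0 ≤ β) (hβ1 : β < 1)
    (R : S → ℝ) (hR : ∀ i, |R i| ≤ C)
    (p1 p0 : S → S → ℝ)
    (hp1nn : ∀ i j, 0 ≤ p1 i j) (hp0nn : ∀ i j, 0 ≤ p0 i j)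
    (hp1 : ∀ i, HasSum (p1 i) 1) (hp0 : ∀ i, HasSum (p0 i) 1)
    (Ω : Set S) (j0 : S)
    -- occupation measures of the policy π started at j0
    (x1 x0 : S → ℝ)
    (hx1nn : ∀ i, 0 ≤ x1 i) (hx0nn : ∀ i, 0 ≤ x0 i)
    (hbal : ∀ i, x1 i + x0 i = (if i = j0 then (1 : ℝ) else 0)
      + β * ∑' j, p1 j i * x1 j + β * ∑' j, p0 j i * x0 j)
    (hxsum : HasSum (fun i => x1 i + x0 i) (1 / (1 - β)))
    -- expected discounted active time of the Ω^c-priority policy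
    (TOc : S → ℝ)
    (hTdp1 : ∀ i ∈ Ωᶜ, TOc i = 1 + β * ∑' j, p1 i j * TOc j)
    (hTdp0 : ∀ i ∈ Ω, TOc i = β * ∑' j, p0 i j * TOc j)
    (hTbd : ∀ i, |TOc i| ≤ 1 / (1 - β))
    -- marginal active-time coefficients A_i^Ω
    (A : S → ℝ)
    (hA : ∀ i, A i = 1 + β * ∑' k, (p1 i k - p0 i k) * TOc k) :
    (∑' i, x1 i) + (∑' i : ↥Ωᶜ, A i * x0 i) =
      TOc j0 + (∑' i : ↥Ω, A i * x1 i) :=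
  stmt18_general β p1 p0 hp1nn hp0nn hp1 hp0 Ω j0 x1 x0 hx1nn hx0nn hbal hxsum TOc hTdp1 hTdp0 hTbd
    A hA
end
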